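/- arXiv:0804.0398 — 4 statements merged into one kernel-verified Lean document; each statement's English description precedes it below -/
import Mathlib

section
/- Let g_α, h_{αβ} ∈ ℝ^n (α, β = 1,…,m, h_{αβ} = h_{βα}) be fixed vectors. Define F₁ = closure of the convex hull of { Σ_α g_α w^α + Σ_{α,β} h_{αβ} w^α w^β : w ∈ ℝ^m } and F₂ = closure of the convex hull of { Σ_{α,β} h_{αβ} w^α w^β : w ∈ ℝ^m }. Then F₂ ⊆ F₁. -/
/-- The closed convex hull `F₂` of the purely quadratic terms is contained in
the closed convex hull `F₁` of the linear-plus-quadratic terms. -/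
theorem F2_subset_F1 (n m : ℕ)
    (g : Fin m → EuclideanSpace ℝ (Fin n))
    (h : Fin m → Fin m → EuclideanSpace ℝ (Fin n))
    (hsymm : ∀ α β, h α β = h β α) :
    closure (convexHull ℝ
      {y : EuclideanSpace ℝ (Fin n) | ∃ w : Fin m → ℝ,
        y = ∑ α, ∑ β, (w α * w β) • h α β}) ⊆
    closure (convexHull ℝ
      {y : EuclideanSpace ℝ (Fin n) | ∃ w : Fin m → ℝ,
        y = ∑ α, w α • g α + ∑ α, ∑ β, (w α * w β) • h α β}) := by
  set S₁ : Set (EuclideanSpace ℝ (Fin n)) :=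
    {y | ∃ w : Fin m → ℝ, y = ∑ α, w α • g α + ∑ α, ∑ β, (w α * w β) • h α β}
  set C := closure (convexHull ℝ S₁) with hC
  have hCconv : Convex ℝ C := (convex_convexHull ℝ S₁).closure
  have hCclosed : IsClosed C := isClosed_closure
  have hzero : (0 : EuclideanSpace ℝ (Fin n)) ∈ S₁ := by
    refine ⟨0, ?_⟩
    simp
  have key : {y : EuclideanSpace ℝ (Fin n) | ∃ w : Fin m → ℝ,
      y = ∑ α, ∑ β, (w α * w β) • h α β} ⊆ C := by
    rintro y ⟨w, rfl⟩
    set A : EuclideanSpace ℝ (Fin n) := ∑ α, w α • g α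
    set B : EuclideanSpace ℝ (Fin n) := ∑ α, ∑ β, (w α * w β) • h α β
    -- sequence z k = t•A + B with t = 1/(k+1)
    have hmem : ∀ k : ℕ, ((k : ℝ) + 1)⁻¹ • A + B ∈ convexHull ℝ S₁ := by
      intro k
      set t : ℝ := ((k : ℝ) + 1)⁻¹ with ht
      have ht0 : (0:ℝ) < t := by positivity
      have ht1 : t ≤ 1 := by
        rw [ht]
        rw [inv_le_one_iff₀]
        right
        linarith [Nat.cast_nonneg (α := ℝ) k]
      have hpt : (t⁻¹ • A + (t⁻¹ * t⁻¹) • B) ∈ S₁ := by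
        refine ⟨fun α => t⁻¹ * w α, ?_⟩
        rw [Finset.smul_sum, Finset.smul_sum]
        congr 1
        · exact Finset.sum_congr rfl (fun α _ => by rw [smul_smul])
        · refine Finset.sum_congr rfl (fun α _ => ?_)
          rw [Finset.smul_sum]
          refine Finset.sum_congr rfl (fun β _ => ?_)
          rw [smul_smul]
          ring_nf
      have hcomb := (convex_convexHull ℝ S₁) (subset_convexHull ℝ S₁ hpt)
        (subset_convexHull ℝ S₁ hzero)
        (a := t * t) (b := 1 - t * t) (by positivity)
        (by nlinarith) (by ring)
      have heq : (t * t) • (t⁻¹ • A + (t⁻¹ * t⁻¹) • B) + (1 - t * t) • (0 : EuclideanSpace ℝ (Fin n))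
          = t • A + B := by
        rw [smul_zero, add_zero, smul_add, smul_smul, smul_smul]
        have : t * t * t⁻¹ = t := by field_simp
        rw [this]
        have : t * t * (t⁻¹ * t⁻¹) = 1 := by field_simp
        rw [this, one_smul]
      rwa [heq] at hcomb
    have htend : Filter.Tendsto (fun k : ℕ => ((k : ℝ) + 1)⁻¹ • A + B)
        Filter.atTop (nhds B) := by
      have h1 : Filter.Tendsto (fun k : ℕ => ((k : ℝ) + 1)⁻¹) Filter.atTop (nhds 0) :=
        tendsto_one_div_add_atTop_nhds_zero_nat.congr (fun k => by rw [one_div])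
      have : Filter.Tendsto (fun k : ℕ => ((k : ℝ) + 1)⁻¹ • A + B)
          Filter.atTop (nhds ((0:ℝ) • A + B)) :=
        ((h1.smul_const A).add tendsto_const_nhds)
      simpa using this
    exact mem_closure_of_tendsto htend (Filter.Eventually.of_forall hmem)
  exact closure_minimal (convexHull_min key hCconv) hCclosed
end

section
/- Let x : [0,T] → ℝ^n solve ẋ = f(x) + Σ_α g_α(x) u̇^α + Σ_{α,β} h_{αβ}(x) u̇^α u̇^β for a C¹ control u, and let s(t) = ∫₀ᵗ(1 + |u̇|²)dτ with inverse t(s). Then the reparametrized path x̂(s) = (t(s), x(t(s))) satisfies, with a⁰, a^α as defined by the reparametrization, dt/ds = (a⁰)² and dx/ds = f(x)(a⁰)² + Σ_α g_α(x) a⁰ a^α + Σ_{α,β} h_{αβ}(x) a^α a^β; in particular x̂ is a solution of the differential inclusion dx̂/ds ∈ F(x̂) with F as defined from f, g_α, h_{αβ}. -/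
/-!
The clock `s` has derivative `1 + |u̇|² ≥ 1`, so it is a strictly increasing homeomorphism of
`[0, T]` onto `[0, s T]`; its inverse `t(s)` is therefore continuous and, by the inverse function
rule, differentiable with derivative `(1 + |u̇|²)⁻¹ = (a⁰)²`. The chain rule gives
`dx/ds = (a⁰)² (f + Σ u̇^α g_α + Σ u̇^α u̇^β h_{αβ})`, which is the rescaled field because
`a^α = a⁰ u̇^α`. Finally `(a⁰, a)` is a unit vector with `a⁰ ∈ [0, 1]`, so the velocity is one of
the points whose closed convex hull is `F`.
-/

open Set Topology

theorem HasDerivAt.hasDerivWithinAt_of_local_left_inverse {𝕜 : Type*} [NontriviallyNormedField 𝕜]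
    {f g : 𝕜 → 𝕜} {f' a : 𝕜} {t : Set 𝕜} (hg : ContinuousWithinAt g t a)
    (hf : HasDerivAt f f' (g a)) (hf' : f' ≠ 0) (ha : a ∈ t)
    (hfg : ∀ᶠ y in 𝓝[t] a, f (g y) = y) : HasDerivWithinAt g f'⁻¹ t a :=
  (hf.hasFDerivAt_equiv hf').hasFDerivWithinAt.of_local_left_inverse (t := univ)
    (by rw [nhdsWithin_univ]; exact hg.tendsto) ha hfg

section InverseOnIcc

variable {s tinv : ℝ → ℝ} {a b : ℝ}

theorem Set.LeftInvOn.mapsTo_Icc (hinv : LeftInvOn tinv s (Icc a b)) (hab : a ≤ b)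
    (hs : ContinuousOn s (Icc a b)) : MapsTo tinv (Icc (s a) (s b)) (Icc a b) := fun r hr => by
  obtain ⟨τ, hτ, rfl⟩ := intermediate_value_Icc hab hs hr
  rwa [hinv hτ]

theorem Set.LeftInvOn.rightInvOn_Icc (hinv : LeftInvOn tinv s (Icc a b)) (hab : a ≤ b)
    (hs : ContinuousOn s (Icc a b)) : RightInvOn tinv s (Icc (s a) (s b)) := fun r hr => by
  obtain ⟨τ, hτ, rfl⟩ := intermediate_value_Icc hab hs hr
  rw [hinv hτ]

theorem StrictMonoOn.continuousOn_of_rightInvOn_Icc (hs : StrictMonoOn s (Icc a b))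
    (hmaps : MapsTo tinv (Icc (s a) (s b)) (Icc a b))
    (hinv : RightInvOn tinv s (Icc (s a) (s b))) :
    ContinuousOn tinv (Icc (s a) (s b)) := by
  have hmono := hs.monotoneOn
  let σ : Icc a b → Icc (s a) (s b) := fun τ =>
    ⟨s τ, hmono (left_mem_Icc.2 (τ.2.1.trans τ.2.2)) τ.2 τ.2.1,
      hmono τ.2 (right_mem_Icc.2 (τ.2.1.trans τ.2.2)) τ.2.2⟩
  have hσ : StrictMono σ := fun p q hpq => hs p.2 q.2 hpq
  let e := hσ.orderIsoOfSurjective σ fun r => ⟨⟨tinv r, hmaps r.2⟩, Subtype.ext (hinv r.2)⟩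
  have he : (Icc (s a) (s b)).domRestrict tinv = fun r => (e.symm r : ℝ) := by
    funext r
    rw [e.symm_apply_eq.2 (Subtype.ext (hinv r.2).symm : r = σ ⟨tinv r, hmaps r.2⟩)]
    rfl
  rw [continuousOn_iff_continuous_domRestrict, he]
  exact continuous_subtype_val.comp e.symm.continuous

end InverseOnIcc

theorem sq_smul_add_sum_smul_add_sum_sum_smul {R E : Type*} [CommSemiring R] [AddCommMonoid E]
    [Module R E] {ι : Type*} [Fintype ι] (c : R) (v : ι → R) (f₀ : E) (g₀ : ι → E)
    (h₀ : ι → ι → E) :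
    c ^ 2 • (f₀ + ∑ α, v α • g₀ α + ∑ α, ∑ β, (v α * v β) • h₀ α β)
      = c ^ 2 • f₀ + ∑ α, (c * (c * v α)) • g₀ α
        + ∑ α, ∑ β, (c * v α * (c * v β)) • h₀ α β := by
  have hg : ∀ α, c ^ 2 * v α = c * (c * v α) := fun α => by ring
  have hh : ∀ α β, c ^ 2 * (v α * v β) = c * v α * (c * v β) := fun α β => by ring
  simp only [smul_add, Finset.smul_sum, smul_smul, hg, hh]

/-- The unit vector `(1, v) / |(1, v)|`; its entries are the paper's `(a⁰, a^α)`. -/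
noncomputable def unitDirection {m : ℕ} (v : Fin m → ℝ) : Fin (m + 1) → ℝ :=
  Fin.cons (1 / √(1 + ∑ α, v α ^ 2)) fun α => v α / √(1 + ∑ β, v β ^ 2)

section UnitDirection

variable {m : ℕ} (v : Fin m → ℝ)

theorem one_add_sum_sq_pos : 0 < 1 + ∑ α, v α ^ 2 := by positivity

theorem unitDirection_zero : unitDirection v 0 = 1 / √(1 + ∑ α, v α ^ 2) := rfl

theorem unitDirection_succ (α : Fin m) :
    unitDirection v α.succ = unitDirection v 0 * v α := by
  simp [unitDirection, div_eq_inv_mul]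

theorem unitDirection_zero_sq : unitDirection v 0 ^ 2 = (1 + ∑ α, v α ^ 2)⁻¹ := by
  rw [unitDirection_zero, div_pow, Real.sq_sqrt (one_add_sum_sq_pos v).le, one_pow, one_div]

theorem unitDirection_zero_mem_Icc : unitDirection v 0 ∈ Icc 0 1 := by
  rw [unitDirection_zero]
  refine ⟨by positivity, div_le_one_of_le₀ ?_ (Real.sqrt_nonneg _)⟩
  exact Real.one_le_sqrt.2 (le_add_of_nonneg_right (by positivity))

theorem sum_unitDirection_sq : ∑ α, unitDirection v α ^ 2 = 1 := by
  simp only [Fin.sum_univ_succ, unitDirection_succ, mul_pow, ← Finset.mul_sum]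
  rw [← mul_one_add, unitDirection_zero_sq, inv_mul_cancel₀ (one_add_sum_sq_pos v).ne']

end UnitDirection

theorem reparametrized_solves_inclusion_general (n m : ℕ) (T : ℝ) (hT : 0 < T)
    (f : EuclideanSpace ℝ (Fin n) → EuclideanSpace ℝ (Fin n))
    (g : Fin m → EuclideanSpace ℝ (Fin n) → EuclideanSpace ℝ (Fin n))
    (h : Fin m → Fin m → EuclideanSpace ℝ (Fin n) → EuclideanSpace ℝ (Fin n))
    (u' : ℝ → Fin m → ℝ)
    (hu' : Continuous u')
    (x : ℝ → EuclideanSpace ℝ (Fin n))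
    (hx : ∀ t ∈ Set.Icc 0 T, HasDerivAt x
      (f (x t) + ∑ α, u' t α • g α (x t)
        + ∑ α, ∑ β, (u' t α * u' t β) • h α β (x t)) t)
    (s : ℝ → ℝ)
    (hs : ∀ t, s t = ∫ τ in (0:ℝ)..t, (1 + ∑ α, (u' τ α)^2))
    (tinv : ℝ → ℝ) (htinv : ∀ τ ∈ Set.Icc 0 T, tinv (s τ) = τ)
    (a0 : ℝ → ℝ) (a : ℝ → Fin m → ℝ)
    (ha0 : ∀ r, a0 r = 1 / Real.sqrt (1 + ∑ α, (u' (tinv r) α)^2))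
    (ha : ∀ r α, a r α = u' (tinv r) α / Real.sqrt (1 + ∑ β, (u' (tinv r) β)^2))
    (F : EuclideanSpace ℝ (Fin n) → Set (ℝ × EuclideanSpace ℝ (Fin n)))
    (hF : ∀ y, F y = closure (convexHull ℝ
      {z | ∃ b : Fin (m+1) → ℝ, b 0 ∈ Set.Icc (0:ℝ) 1 ∧
        (∑ α, (b α)^2) = 1 ∧
        z = ((b 0)^2, (b 0)^2 • f y + ∑ α : Fin m, (b 0 * b α.succ) • g α y
          + ∑ α : Fin m, ∑ β : Fin m, (b α.succ * b β.succ) • h α β y)})) :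
    ∀ r ∈ Set.Icc 0 (s T),
      HasDerivWithinAt tinv ((a0 r)^2) (Set.Icc 0 (s T)) r ∧
      HasDerivWithinAt (fun ρ => x (tinv ρ))
        ((a0 r)^2 • f (x (tinv r)) + ∑ α, (a0 r * a r α) • g α (x (tinv r))
          + ∑ α, ∑ β, (a r α * a r β) • h α β (x (tinv r)))
        (Set.Icc 0 (s T)) r ∧
      (((a0 r)^2 : ℝ),
        (a0 r)^2 • f (x (tinv r)) + ∑ α, (a0 r * a r α) • g α (x (tinv r))
          + ∑ α, ∑ β, (a r α * a r β) • h α β (x (tinv r)))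
        ∈ F (x (tinv r)) := by
  have hsd : ∀ t, HasDerivAt s (1 + ∑ α, u' t α ^ 2) t := by
    rw [funext hs]
    exact fun t => (Continuous.integral_hasStrictDerivAt (by fun_prop) 0 t).hasDerivAt
  have hsc : Continuous s := continuous_iff_continuousAt.2 fun t => (hsd t).continuousAt
  have hsm : StrictMono s :=
    strictMono_of_deriv_pos fun t => (hsd t).deriv ▸ one_add_sum_sq_pos (u' t)
  have hmaps := LeftInvOn.mapsTo_Icc htinv hT.le hsc.continuousOn
  have hinv := LeftInvOn.rightInvOn_Icc htinv hT.le hsc.continuousOn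
  have hcont := (hsm.strictMonoOn (Icc 0 T)).continuousOn_of_rightInvOn_Icc hmaps hinv
  have hs0 : s 0 = 0 := by simp [hs]
  rw [hs0] at hmaps hinv hcont
  intro r hr
  have ha0r : a0 r = unitDirection (u' (tinv r)) 0 := ha0 r
  have har : ∀ α, a r α = unitDirection (u' (tinv r)) α.succ := ha r
  simp only [ha0r, har]
  have hd : HasDerivWithinAt tinv (unitDirection (u' (tinv r)) 0 ^ 2) (Icc 0 (s T)) r := by
    rw [unitDirection_zero_sq]
    exact (hsd (tinv r)).hasDerivWithinAt_of_local_left_inverse (hcont r hr)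
      (one_add_sum_sq_pos _).ne' hr (eventually_nhdsWithin_of_forall hinv)
  refine ⟨hd, ?_, ?_⟩
  · simp only [unitDirection_succ]
    rw [← sq_smul_add_sum_smul_add_sum_sum_smul]
    exact (hx _ (hmaps hr)).scomp_hasDerivWithinAt r hd
  · rw [hF]
    exact subset_closure (subset_convexHull ℝ _ ⟨_, unitDirection_zero_mem_Icc _,
      sum_unitDirection_sq _, rfl⟩)

/-- The reparametrized path `x̂(s) = (t(s), x(t(s)))` of a solution of the
impulsive system solves the rescaled system, and hence the differential
inclusion `dx̂/ds ∈ F(x̂)`. -/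
theorem reparametrized_solves_inclusion (n m : ℕ) (T : ℝ) (hT : 0 < T)
    (f : EuclideanSpace ℝ (Fin n) → EuclideanSpace ℝ (Fin n))
    (g : Fin m → EuclideanSpace ℝ (Fin n) → EuclideanSpace ℝ (Fin n))
    (h : Fin m → Fin m → EuclideanSpace ℝ (Fin n) → EuclideanSpace ℝ (Fin n))
    (Kf Kg Kh : NNReal)
    (hf : LipschitzWith Kf f) (hg : ∀ α, LipschitzWith Kg (g α))
    (hh : ∀ α β, LipschitzWith Kh (h α β))
    (u u' : ℝ → Fin m → ℝ)
    (hu : ∀ τ, HasDerivAt u (u' τ) τ) (hu' : Continuous u')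
    (x : ℝ → EuclideanSpace ℝ (Fin n))
    (hx : ∀ t ∈ Set.Icc 0 T, HasDerivAt x
      (f (x t) + ∑ α, u' t α • g α (x t)
        + ∑ α, ∑ β, (u' t α * u' t β) • h α β (x t)) t)
    (s : ℝ → ℝ)
    (hs : ∀ t, s t = ∫ τ in (0:ℝ)..t, (1 + ∑ α, (u' τ α)^2))
    (tinv : ℝ → ℝ) (htinv : ∀ τ ∈ Set.Icc 0 T, tinv (s τ) = τ)
    (htinv' : ∀ r ∈ Set.Icc 0 (s T), tinv r ∈ Set.Icc 0 T)
    (a0 : ℝ → ℝ) (a : ℝ → Fin m → ℝ)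
    (ha0 : ∀ r, a0 r = 1 / Real.sqrt (1 + ∑ α, (u' (tinv r) α)^2))
    (ha : ∀ r α, a r α = u' (tinv r) α / Real.sqrt (1 + ∑ β, (u' (tinv r) β)^2))
    (F : EuclideanSpace ℝ (Fin n) → Set (ℝ × EuclideanSpace ℝ (Fin n)))
    (hF : ∀ y, F y = closure (convexHull ℝ
      {z | ∃ b : Fin (m+1) → ℝ, b 0 ∈ Set.Icc (0:ℝ) 1 ∧
        (∑ α, (b α)^2) = 1 ∧
        z = ((b 0)^2, (b 0)^2 • f y + ∑ α : Fin m, (b 0 * b α.succ) • g α y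
          + ∑ α : Fin m, ∑ β : Fin m, (b α.succ * b β.succ) • h α β y)})) :
    ∀ r ∈ Set.Icc 0 (s T),
      HasDerivWithinAt tinv ((a0 r)^2) (Set.Icc 0 (s T)) r ∧
      HasDerivWithinAt (fun ρ => x (tinv ρ))
        ((a0 r)^2 • f (x (tinv r)) + ∑ α, (a0 r * a r α) • g α (x (tinv r))
          + ∑ α, ∑ β, (a r α * a r β) • h α β (x (tinv r)))
        (Set.Icc 0 (s T)) r ∧
      (((a0 r)^2 : ℝ),
        (a0 r)^2 • f (x (tinv r)) + ∑ α, (a0 r * a r α) • g α (x (tinv r))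
          + ∑ α, ∑ β, (a r α * a r β) • h α β (x (tinv r)))
        ∈ F (x (tinv r)) :=
  reparametrized_solves_inclusion_general n m T hT f g h u' hu' x hx s hs tinv htinv a0 a ha0 ha F
    hF
end

section
/- Consider the planar system q̇ = p, ṗ = -∂U_W/∂q(q) where U_W(q) = g·cos q - (1/2)(1 + cos² q)·w² with constants g > 0 and w² > g. Then U_W has a strict local minimum at q = 0, and consequently H(q,p) = p²/2 + U_W(q) - U_W(0) is a Lyapunov function establishing that (q,p) = (0,0) is a stable equilibrium of this system. -/
/-!
Writing `U_W q - U_W 0 = (1 - cos q) (½ (1 + cos q) w² - g)`, the first factor vanishes only at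
`q = 0` near the origin and the second tends to `w² - g > 0`, so `0` is a strict local minimum.
Stability is then Lagrange–Dirichlet: the energy `p²/2 + U_W q` is conserved and, starting close
to the origin, stays below the least value of `U_W` on the two points `q = ±r`, so by the
intermediate value theorem `|q|` can never reach `r`; the same energy bound controls `p`.
-/

open Real Set Filter Topology

noncomputable def energy (V : ℝ → ℝ) (x y : ℝ) : ℝ := y ^ 2 / 2 + V x

lemma energy_eq_of_hasDerivAt {V : ℝ → ℝ} (hV : Differentiable ℝ V) {q p : ℝ → ℝ}
    (hq : ∀ t, HasDerivAt q (p t) t) (hp : ∀ t, HasDerivAt p (-(deriv V (q t))) t) (t : ℝ) :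
    energy V (q t) (p t) = energy V (q 0) (p 0) := by
  have hE : ∀ s, HasDerivAt (fun s => energy V (q s) (p s)) 0 s := fun s => by
    have h := (((hp s).pow 2).div_const 2).add ((hV (q s)).hasDerivAt.comp s (hq s))
    exact h.congr_deriv (by ring)
  exact is_const_of_deriv_eq_zero (fun s => (hE s).differentiableAt) (fun s => (hE s).deriv) t 0

lemma exists_pos_energy_lt {V : ℝ → ℝ} (hV : Continuous V) {m : ℝ} (hm : 0 < m) :
    ∃ η > 0, ∀ x y : ℝ, |x| < η → |y| < η → energy V x y < V 0 + m := by
  have hcont : ContinuousAt (fun z : ℝ × ℝ => energy V z.1 z.2) (0, 0) := by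
    unfold energy; fun_prop (disch := norm_num)
  obtain ⟨η, hη, hball⟩ := Metric.eventually_nhds_iff.1 <|
    hcont.eventually (gt_mem_nhds (show energy V 0 0 < V 0 + m by simp [energy, hm]))
  refine ⟨η, hη, fun x y hx hy => hball (y := (x, y)) ?_⟩
  simpa only [Prod.dist_eq, Real.dist_eq, sub_zero, max_lt_iff] using ⟨hx, hy⟩

lemma forall_lt_of_forall_ne {f : ℝ → ℝ} {r : ℝ} (hf : Continuous f) (h0 : f 0 < r)
    (hne : ∀ t ≥ 0, f t ≠ r) : ∀ t ≥ 0, f t < r := by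
  intro t ht
  by_contra! h
  obtain ⟨s, hs, hfs⟩ := intermediate_value_Icc ht hf.continuousOn ⟨h0.le, h⟩
  exact hne s hs.1 hfs

theorem stable_of_strict_local_min {V : ℝ → ℝ} (hV : Differentiable ℝ V)
    (hmin : ∃ δ > 0, ∀ x : ℝ, x ≠ 0 → |x| < δ → V 0 < V x) :
    ∀ ε > 0, ∃ δ > 0, ∀ q p : ℝ → ℝ,
      (∀ t, HasDerivAt q (p t) t) →
      (∀ t, HasDerivAt p (-(deriv V (q t))) t) →
      |q 0| ≤ δ → |p 0| ≤ δ → ∀ t ≥ 0, |q t| ≤ ε ∧ |p t| ≤ ε := by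
  obtain ⟨δ₀, hδ₀, hmin⟩ := hmin
  intro ε hε
  set r := min ε (δ₀ / 2)
  have hr : 0 < r := lt_min hε (half_pos hδ₀)
  have hrδ₀ : r < δ₀ := (min_le_right _ _).trans_lt (half_lt_self hδ₀)
  set m := min (min (V r) (V (-r)) - V 0) (ε ^ 2 / 2)
  have hm : 0 < m := by
    refine lt_min (sub_pos.2 (lt_min ?_ ?_)) (by positivity) <;>
      exact hmin _ (by simp [hr.ne']) (by simpa [abs_of_pos hr] using hrδ₀)
  obtain ⟨η, hη, hsmall⟩ := exists_pos_energy_lt hV.continuous hm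
  refine ⟨min (r / 2) (η / 2), by positivity, fun q p hq hp hq0 hp0 => ?_⟩
  have hE : ∀ t, energy V (q t) (p t) < V 0 + m := fun t => by
    rw [energy_eq_of_hasDerivAt hV hq hp t]
    apply hsmall <;> linarith [min_le_right (r / 2) (η / 2)]
  have hconfined : ∀ t ≥ 0, |q t| < r := by
    refine forall_lt_of_forall_ne (continuous_iff_continuousAt.2 fun t => (hq t).continuousAt).abs
      (by linarith [min_le_left (r / 2) (η / 2)]) fun t _ hqt => (hE t).not_ge ?_
    have hVr : V 0 + m ≤ V (q t) := by
      have := min_le_left (min (V r) (V (-r)) - V 0) (ε ^ 2 / 2)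
      rcases (abs_eq hr.le).1 hqt with h | h <;> rw [h] <;>
        linarith [min_le_left (V r) (V (-r)), min_le_right (V r) (V (-r))]
    linarith [sq_nonneg (p t), show energy V (q t) (p t) = p t ^ 2 / 2 + V (q t) from rfl]
  intro t ht
  refine ⟨(hconfined t ht).le.trans (min_le_left _ _), abs_le_of_sq_le_sq ?_ hε.le⟩
  have hVq : V 0 ≤ V (q t) := by
    rcases eq_or_ne (q t) 0 with h | h
    · rw [h]
    · exact (hmin _ h ((hconfined t ht).trans hrδ₀)).le
  linarith [hE t, min_le_right (min (V r) (V (-r)) - V 0) (ε ^ 2 / 2),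
    show energy V (q t) (p t) = p t ^ 2 / 2 + V (q t) from rfl]

noncomputable def effectivePotential (g w q : ℝ) : ℝ :=
  g * cos q - (1 / 2) * (1 + cos q ^ 2) * w ^ 2

lemma effectivePotential_sub_zero (g w x : ℝ) :
    effectivePotential g w x - effectivePotential g w 0 =
      (1 - cos x) * ((1 / 2) * (1 + cos x) * w ^ 2 - g) := by
  simp only [effectivePotential, cos_zero]; ring

lemma differentiable_effectivePotential (g w : ℝ) : Differentiable ℝ (effectivePotential g w) := by
  unfold effectivePotential; fun_prop

theorem effectivePotential_strict_local_min {g w : ℝ} (hw : g < w ^ 2) :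
    ∃ δ > 0, ∀ x : ℝ, x ≠ 0 → |x| < δ → effectivePotential g w 0 < effectivePotential g w x := by
  have hfactor : Tendsto (fun x => (1 / 2) * (1 + cos x) * w ^ 2 - g) (𝓝 0) (𝓝 (w ^ 2 - g)) :=
    (by fun_prop : Continuous fun x => (1 / 2) * (1 + cos x) * w ^ 2 - g).tendsto' 0 _
      (by simp only [cos_zero]; ring)
  obtain ⟨δ, hδ, hpos⟩ := Metric.eventually_nhds_iff.1 (hfactor.eventually_const_lt (sub_pos.2 hw))
  refine ⟨min δ π, by positivity, fun x hx hxδ => ?_⟩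
  have hcos : cos x < 1 :=
    (cos_le_one_sub_mul_cos_sq (hxδ.le.trans (min_le_right _ _))).trans_lt
      (sub_lt_self _ (by positivity))
  rw [← sub_pos, effectivePotential_sub_zero]
  exact mul_pos (sub_pos.2 hcos) (hpos (by simpa using hxδ.trans_le (min_le_left _ _)))

theorem inverted_pendulum_stable_general (g w : ℝ) (hw : g < w^2)
    (UW : ℝ → ℝ)
    (hUW : ∀ q, UW q = g * Real.cos q - (1/2) * (1 + Real.cos q ^ 2) * w^2) :
    (∃ δ > 0, ∀ q : ℝ, q ≠ 0 → |q| < δ → UW 0 < UW q) ∧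
    (∀ ε > 0, ∃ δ > 0, ∀ q p : ℝ → ℝ,
      (∀ t, HasDerivAt q (p t) t) →
      (∀ t, HasDerivAt p (-(deriv UW (q t))) t) →
      |q 0| ≤ δ → |p 0| ≤ δ → ∀ t ≥ 0, |q t| ≤ ε ∧ |p t| ≤ ε) := by
  obtain rfl : UW = effectivePotential g w := funext hUW
  exact ⟨effectivePotential_strict_local_min hw,
    stable_of_strict_local_min (differentiable_effectivePotential g w)
      (effectivePotential_strict_local_min hw)⟩

/-- Vibrational stabilization of the inverted pendulum: the effective potential
`U_W(q) = g cos q - ½(1 + cos²q) w²` with `w² > g > 0` has a strict local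
minimum at `q = 0`, and the origin is a stable equilibrium of the system
`q̇ = p`, `ṗ = -U_W'(q)`. -/
theorem inverted_pendulum_stable (g w : ℝ) (hg : 0 < g) (hw : g < w^2)
    (UW : ℝ → ℝ)
    (hUW : ∀ q, UW q = g * Real.cos q - (1/2) * (1 + Real.cos q ^ 2) * w^2) :
    (∃ δ > 0, ∀ q : ℝ, q ≠ 0 → |q| < δ → UW 0 < UW q) ∧
    (∀ ε > 0, ∃ δ > 0, ∀ q p : ℝ → ℝ,
      (∀ t, HasDerivAt q (p t) t) →
      (∀ t, HasDerivAt p (-(deriv UW (q t))) t) →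
      |q 0| ≤ δ → |p 0| ≤ δ → ∀ t ≥ 0, |q t| ≤ ε ∧ |p t| ≤ ε) :=
  inverted_pendulum_stable_general g w hw UW hUW
end

section
/- Let E(q¹,q²) = I₂ - (4/(−3+cos(2(q¹−q²)))) · [[sin²q¹, (1/2)sin 2q¹],[(1/2)sin 2q¹, cos²q¹]], a 2×2 symmetric matrix. Then det(∂E/∂q¹) = -16/(-3 + cos(2(q¹-q²)))² < 0 and det(∂E/∂q²) = 0 for all q¹, q² ∈ ℝ. -/
private lemma Dne (x : ℝ) : -3 + Real.cos x ≠ 0 := by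
  nlinarith [Real.neg_one_le_cos x, Real.cos_le_one x]

/-- For the effective inertia matrix `E(q¹,q²)` of the double pendulum with
moving pivot, `det(∂E/∂q¹) = -16/(-3+cos 2(q¹-q²))² < 0` and
`det(∂E/∂q²) = 0`. -/
theorem double_pendulum_curvature_dets (E : ℝ → ℝ → Matrix (Fin 2) (Fin 2) ℝ)
    (hE : ∀ q1 q2, E q1 q2 = (1 : Matrix (Fin 2) (Fin 2) ℝ) -
      (4 / (-3 + Real.cos (2*(q1 - q2)))) •
        Matrix.of ![![Real.sin q1 ^ 2, (1/2) * Real.sin (2*q1)],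
                    ![(1/2) * Real.sin (2*q1), Real.cos q1 ^ 2]]) :
    ∀ q1 q2 : ℝ,
      Matrix.det (Matrix.of fun i j => deriv (fun t => E t q2 i j) q1) =
        -16 / (-3 + Real.cos (2*(q1 - q2)))^2 ∧
      -16 / (-3 + Real.cos (2*(q1 - q2)))^2 < (0:ℝ) ∧
      Matrix.det (Matrix.of fun i j => deriv (fun t => E q1 t i j) q2) = 0 := by
  intro q1 q2
  have hDne' : ∀ x : ℝ, -3 + Real.cos x ≠ 0 := Dne
  -- D as function of t (first variable)
  have hDt : HasDerivAt (fun t : ℝ => -3 + Real.cos (2*(t - q2)))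
      (-Real.sin (2*(q1-q2)) * 2) q1 := by
    have h1 : HasDerivAt (fun t:ℝ => 2*(t - q2)) 2 q1 := by
      simpa using ((hasDerivAt_id q1).sub_const q2).const_mul 2
    simpa using ((Real.hasDerivAt_cos _).comp q1 h1).const_add (-3)
  -- D as function of s (second variable)
  have hDs : HasDerivAt (fun t : ℝ => -3 + Real.cos (2*(q1 - t)))
      (-Real.sin (2*(q1-q2)) * (-2)) q2 := by
    have h1 : HasDerivAt (fun t:ℝ => 2*(q1 - t)) (-2) q2 := by
      have := ((hasDerivAt_id q2).const_sub q1).const_mul 2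
      simpa using this
    simpa using ((Real.hasDerivAt_cos _).comp q2 h1).const_add (-3)
  -- entry functions in t
  have e00 : (fun t => E t q2 0 0)
      = fun t => 1 - 4 * Real.sin t ^ 2 / (-3 + Real.cos (2*(t - q2))) := by
    funext t; rw [hE]; simp [Matrix.one_apply, smul_eq_mul]; ring
  have e01 : (fun t => E t q2 0 1)
      = fun t => -(2 * Real.sin (2*t) / (-3 + Real.cos (2*(t - q2)))) := by
    funext t; rw [hE]; simp [Matrix.one_apply, smul_eq_mul]; ring
  have e10 : (fun t => E t q2 1 0)
      = fun t => -(2 * Real.sin (2*t) / (-3 + Real.cos (2*(t - q2)))) := by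
    funext t; rw [hE]; simp [Matrix.one_apply, smul_eq_mul]; ring
  have e11 : (fun t => E t q2 1 1)
      = fun t => 1 - 4 * Real.cos t ^ 2 / (-3 + Real.cos (2*(t - q2))) := by
    funext t; rw [hE]; simp [Matrix.one_apply, smul_eq_mul]; ring
  -- entry functions in s
  have f00 : (fun t => E q1 t 0 0)
      = fun t => 1 - 4 * Real.sin q1 ^ 2 / (-3 + Real.cos (2*(q1 - t))) := by
    funext t; rw [hE]; simp [Matrix.one_apply, smul_eq_mul]; ring
  have f01 : (fun t => E q1 t 0 1)
      = fun t => -(2 * Real.sin (2*q1) / (-3 + Real.cos (2*(q1 - t)))) := by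
    funext t; rw [hE]; simp [Matrix.one_apply, smul_eq_mul]; ring
  have f10 : (fun t => E q1 t 1 0)
      = fun t => -(2 * Real.sin (2*q1) / (-3 + Real.cos (2*(q1 - t)))) := by
    funext t; rw [hE]; simp [Matrix.one_apply, smul_eq_mul]; ring
  have f11 : (fun t => E q1 t 1 1)
      = fun t => 1 - 4 * Real.cos q1 ^ 2 / (-3 + Real.cos (2*(q1 - t))) := by
    funext t; rw [hE]; simp [Matrix.one_apply, smul_eq_mul]; ring
  -- derivatives in t
  have hn00 : HasDerivAt (fun t => 4 * Real.sin t ^ 2)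
      (4 * (2 * Real.sin q1 * Real.cos q1)) q1 := by
    simpa using ((Real.hasDerivAt_sin q1).pow 2).const_mul 4
  have hn01 : HasDerivAt (fun t => 2 * Real.sin (2*t)) (2 * (Real.cos (2*q1) * 2)) q1 := by
    have h1 : HasDerivAt (fun t:ℝ => 2*t) 2 q1 := by simpa using (hasDerivAt_id q1).const_mul 2
    exact ((Real.hasDerivAt_sin _).comp q1 h1).const_mul 2
  have hn11 : HasDerivAt (fun t => 4 * Real.cos t ^ 2)
      (4 * (2 * Real.cos q1 * (-Real.sin q1))) q1 := by
    simpa using ((Real.hasDerivAt_cos q1).pow 2).const_mul 4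
  have d00 := ((hn00.div hDt (hDne' _)).const_sub 1).deriv
  have d01 := ((hn01.div hDt (hDne' _)).neg).deriv
  have d11 := ((hn11.div hDt (hDne' _)).const_sub 1).deriv
  -- derivatives in s (numerators constant)
  have g00 := (((hasDerivAt_const q2 (4 * Real.sin q1 ^ 2)).div hDs (hDne' _)).const_sub 1).deriv
  have g01 := (((hasDerivAt_const q2 (2 * Real.sin (2*q1))).div hDs (hDne' _)).neg).deriv
  have g11 := (((hasDerivAt_const q2 (4 * Real.cos q1 ^ 2)).div hDs (hDne' _)).const_sub 1).deriv
  refine ⟨?_, ?_, ?_⟩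
  · rw [Matrix.det_fin_two]
    simp only [Matrix.of_apply]
    simp only [Pi.div_def, Pi.neg_def] at d00 d01 d11
    rw [e00, e01, e10, e11, d00, d01, d11]
    have hA : (-3 + Real.cos (2*(q1-q2))) ≠ 0 := Dne _
    set A := -3 + Real.cos (2*(q1-q2)) with hAdef
    set B := Real.sin (2*(q1-q2)) with hBdef
    rw [Real.sin_two_mul, Real.cos_two_mul]
    have hpyth := Real.sin_sq_add_cos_sq q1
    field_simp
    linear_combination (-64 * A * (Real.sin q1 * Real.cos q1 * B + A * Real.cos q1 ^ 2)) * hpyth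
  · apply div_neg_of_neg_of_pos
    · norm_num
    · have hA : (-3 + Real.cos (2*(q1-q2))) ≠ 0 := Dne _
      positivity
  · rw [Matrix.det_fin_two]
    simp only [Matrix.of_apply]
    simp only [Pi.div_def, Pi.neg_def] at g00 g01 g11
    rw [f00, f01, f10, f11, g00, g01, g11]
    have hA : (-3 + Real.cos (2*(q1-q2))) ≠ 0 := Dne _
    set A := -3 + Real.cos (2*(q1-q2)) with hAdef
    set B := Real.sin (2*(q1-q2)) with hBdef
    rw [Real.sin_two_mul]
    field_simp
    ring
end
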